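/- Let X be a Banach space. A nonempty weak*-closed subset K of X* is convex and weak*-compact if and only if it is co̅-compact, i.e., K = co̅(K) and every family of subsets of K of the form co̅(F) ∩ K with the finite intersection property has nonempty intersection (where subsets are taken weak*-closed convex). In particular, a co̅-closed, co̅-compact set must be norm-bounded. -/

import Mathlib

/-!
Convex weak*-compact sets have the finite intersection property for closed subsets, in
particular for co̅-closed ones. Conversely, a co̅-compact set `K` is convex, and for each
`x : X` the real-linear functional `σ ↦ Re σ x` is bounded above on `K`: otherwise the convex
weak*-closed sets `{σ ∈ K | n ≤ Re σ x}` form a decreasing sequence of nonempty sets with empty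
intersection. Applied to `±x` and `±i x`, this makes `K` pointwise bounded, hence norm-bounded
by the uniform boundedness principle, hence weak*-compact by Banach–Alaoglu.
-/

/-- The weak*-closed convex hull operator on subsets of the dual. -/
noncomputable def cobar {𝕜 X : Type*} [RCLike 𝕜] [NormedAddCommGroup X] [NormedSpace 𝕜 X]
    (S : Set (WeakDual 𝕜 X)) : Set (WeakDual 𝕜 X) :=
  closure (convexHull ℝ S)

open Set

theorem Set.sInter_nonempty_of_subset_range_antitone {α : Type*} {S : ℕ → Set α}
    (hS : Antitone S) (hne : ∀ n, (S n).Nonempty) (t : Finset (Set α)) (ht : ↑t ⊆ range S) :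
    (⋂₀ (↑t : Set (Set α))).Nonempty := by
  choose! idx hidx using fun s (hs : s ∈ t) => ht hs
  obtain ⟨x, hx⟩ := hne (t.sup idx)
  refine ⟨x, fun s hs => ?_⟩
  rw [← hidx s hs]
  exact hS (Finset.le_sup hs) hx

theorem IsCompact.sInter_nonempty_of_finite_inter {α : Type*} [TopologicalSpace α] {K : Set α}
    (hK : IsCompact K) {F : Set (Set α)} (hF : ∀ s ∈ F, s ⊆ K ∧ IsClosed s)
    (hfip : ∀ t : Finset (Set α), ↑t ⊆ F → (⋂₀ (↑t : Set (Set α))).Nonempty) :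
    (⋂₀ F).Nonempty := by
  classical
  rcases F.eq_empty_or_nonempty with rfl | ⟨s₀, hs₀⟩
  · simpa using hfip ∅ (by simp)
  have hs₀c : IsCompact s₀ := hK.of_isClosed_subset (hF s₀ hs₀).2 (hF s₀ hs₀).1
  obtain ⟨x, -, hx⟩ := hs₀c.inter_iInter_nonempty (fun s : F => (s : Set α))
    (fun s => (hF s s.2).2) fun u => by
      obtain ⟨x, hx⟩ := hfip (insert s₀ (u.image Subtype.val)) (by
        simp [insert_subset_iff, hs₀])
      refine ⟨x, hx s₀ (by simp), mem_iInter₂.2 fun s hs => hx s ?_⟩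
      exact Finset.mem_coe.2 (Finset.mem_insert_of_mem (Finset.mem_image_of_mem _ hs))
  rw [sInter_eq_iInter]
  exact ⟨x, hx⟩

theorem QuasiconcaveOn.bddAbove_image_of_closedConvex_fip {E : Type*} [AddCommMonoid E]
    [SMul ℝ E] [TopologicalSpace E] {K : Set E} {f : E → ℝ}
    (hK : IsClosed K) (hfc : Continuous f) (hfq : QuasiconcaveOn ℝ K f)
    (hfip : ∀ F : Set (Set E), (∀ s ∈ F, s ⊆ K ∧ IsClosed s ∧ Convex ℝ s) →
      (∀ t : Finset (Set E), ↑t ⊆ F → (⋂₀ (↑t : Set (Set E))).Nonempty) → (⋂₀ F).Nonempty) :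
    BddAbove (f '' K) := by
  by_contra hunb
  set S : ℕ → Set E := fun n => {x ∈ K | (n : ℝ) ≤ f x}
  have hS : Antitone S := fun m n hmn x hx => ⟨hx.1, le_trans (by exact_mod_cast hmn) hx.2⟩
  have hne : ∀ n, (S n).Nonempty := fun n => by
    obtain ⟨-, ⟨x, hxK, rfl⟩, hx⟩ := not_bddAbove_iff.1 hunb n
    exact ⟨x, hxK, hx.le⟩
  obtain ⟨x, hx⟩ := hfip (range S)
    (forall_mem_range.2 fun n =>
      ⟨sep_subset _ _, hK.inter (isClosed_le continuous_const hfc), hfq n⟩)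
    (Set.sInter_nonempty_of_subset_range_antitone hS hne)
  obtain ⟨n, hn⟩ := exists_nat_gt (f x)
  exact (hx (S n) (mem_range_self n)).2.not_gt hn

theorem RCLike.norm_le_abs_re_add_abs_im {𝕜 : Type*} [RCLike 𝕜] (z : 𝕜) :
    ‖z‖ ≤ |re z| + |im z| := by
  refine le_of_sq_le_sq ?_ (by positivity)
  rw [norm_sq_eq_def]
  nlinarith [abs_mul_abs_self (re z), abs_mul_abs_self (im z), abs_nonneg (re z),
    abs_nonneg (im z)]

namespace WeakDual

variable {𝕜 X : Type*} [RCLike 𝕜] [NormedAddCommGroup X] [NormedSpace 𝕜 X]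

theorem cobar_eq_self_iff {s : Set (WeakDual 𝕜 X)} : cobar s = s ↔ Convex ℝ s ∧ IsClosed s := by
  refine ⟨fun h => h ▸ ⟨(convex_convexHull ℝ s).closure, isClosed_closure⟩, fun ⟨hc, hcl⟩ => ?_⟩
  -- `convert` bridges two defeq `SMul ℝ` instances that `rw` would unfold at great cost.
  have hhull : convexHull ℝ s = s := convexHull_eq_self.2 (by convert hc)
  rw [cobar, hhull, hcl.closure_eq]

theorem isLinearMap_re_apply (x : X) : IsLinearMap ℝ fun σ : WeakDual 𝕜 X => RCLike.re (σ x) :=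
  ⟨fun σ τ => map_add RCLike.re (σ x) (τ x), fun c σ => RCLike.smul_re c (σ x)⟩

theorem quasiconcaveOn_re_apply {K : Set (WeakDual 𝕜 X)} (hK : Convex ℝ K) (x : X) :
    QuasiconcaveOn ℝ K fun σ : WeakDual 𝕜 X => RCLike.re (σ x) :=
  ((IsLinearMap.mk' _ (isLinearMap_re_apply x)).concaveOn hK).quasiconcaveOn

theorem continuous_re_apply (x : X) : Continuous fun σ : WeakDual 𝕜 X => RCLike.re (σ x) :=
  RCLike.continuous_re.comp (eval_continuous x)

theorem isBounded_of_forall_bddAbove_re [CompleteSpace X] {K : Set (WeakDual 𝕜 X)}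
    (h : ∀ x : X, BddAbove ((fun σ : WeakDual 𝕜 X => RCLike.re (σ x)) '' K)) :
    Bornology.IsBounded K := by
  have habs : ∀ y : X, ∃ C, ∀ σ ∈ K, |RCLike.re (σ y)| ≤ C := fun y => by
    obtain ⟨C₁, hC₁⟩ := h y
    obtain ⟨C₂, hC₂⟩ := h (-y)
    refine ⟨max C₁ C₂, fun σ hσ => abs_le.2 ⟨?_, ?_⟩⟩
    · have hneg := hC₂ (mem_image_of_mem _ hσ)
      simp only [map_neg] at hneg
      linarith [le_max_right C₁ C₂]
    · exact (hC₁ (mem_image_of_mem _ hσ)).trans (le_max_left _ _)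
  rw [isBounded_iff_isVonNBounded, (withSeminorms 𝕜 X).isVonNBounded_iff_seminorm_bddAbove]
  intro x
  obtain ⟨C, hC⟩ := habs x
  obtain ⟨D, hD⟩ := habs ((RCLike.I : 𝕜) • x)
  refine ⟨C + D, forall_mem_image.2 fun σ hσ => ?_⟩
  have him : |RCLike.im (σ x)| = |RCLike.re (σ ((RCLike.I : 𝕜) • x))| := by
    rw [map_smul, smul_eq_mul, RCLike.I_mul_re, abs_neg]
  calc ‖σ x‖ ≤ |RCLike.re (σ x)| + |RCLike.im (σ x)| := RCLike.norm_le_abs_re_add_abs_im _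
    _ ≤ C + D := by rw [him]; exact add_le_add (hC σ hσ) (hD σ hσ)

end WeakDual

theorem convex_weakStarCompact_iff_cobarCompact_general
    {𝕜 X : Type*} [RCLike 𝕜] [NormedAddCommGroup X] [NormedSpace 𝕜 X] [CompleteSpace X]
    (K : Set (WeakDual 𝕜 X)) (hKcl : IsClosed K) :
    (Convex ℝ K ∧ IsCompact K) ↔
      (cobar K = K ∧
        ∀ F : Set (Set (WeakDual 𝕜 X)),
          (∀ s ∈ F, s ⊆ K ∧ cobar s = s) →
          (∀ t : Finset (Set (WeakDual 𝕜 X)), ↑t ⊆ F → (⋂₀ (↑t : Set (Set (WeakDual 𝕜 X)))).Nonempty) →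
          (⋂₀ F).Nonempty) := by
  constructor
  · rintro ⟨hconv, hcomp⟩
    refine ⟨WeakDual.cobar_eq_self_iff.2 ⟨hconv, hKcl⟩, fun F hF hfip => ?_⟩
    exact hcomp.sInter_nonempty_of_finite_inter
      (fun s hs => ⟨(hF s hs).1, (WeakDual.cobar_eq_self_iff.1 (hF s hs).2).2⟩) hfip
  · rintro ⟨hcobar, hfip⟩
    have hconv : Convex ℝ K := (WeakDual.cobar_eq_self_iff.1 hcobar).1
    refine ⟨hconv, WeakDual.isCompact_of_bounded_of_closed ?_ hKcl⟩
    refine WeakDual.isBounded_of_forall_bddAbove_re fun x => ?_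
    refine (WeakDual.quasiconcaveOn_re_apply hconv x).bddAbove_image_of_closedConvex_fip hKcl
      (WeakDual.continuous_re_apply x) fun F hF => hfip F fun s hs => ?_
    exact ⟨(hF s hs).1, WeakDual.cobar_eq_self_iff.2 ⟨(hF s hs).2.2, (hF s hs).2.1⟩⟩

/-- A nonempty weak*-closed subset `K` of the dual of a Banach space
is convex and weak*-compact if and only if it is `co̅`-compact: `K` is `co̅`-closed and
every family of `co̅`-closed subsets of `K` with the finite intersection property has
nonempty intersection.  In particular such a set must be norm-bounded. -/
theorem convex_weakStarCompact_iff_cobarCompact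
    {𝕜 X : Type*} [RCLike 𝕜] [NormedAddCommGroup X] [NormedSpace 𝕜 X] [CompleteSpace X]
    (K : Set (WeakDual 𝕜 X)) (hKne : K.Nonempty) (hKcl : IsClosed K) :
    (Convex ℝ K ∧ IsCompact K) ↔
      (cobar K = K ∧
        ∀ F : Set (Set (WeakDual 𝕜 X)),
          (∀ s ∈ F, s ⊆ K ∧ cobar s = s) →
          (∀ t : Finset (Set (WeakDual 𝕜 X)), ↑t ⊆ F → (⋂₀ (↑t : Set (Set (WeakDual 𝕜 X)))).Nonempty) →
          (⋂₀ F).Nonempty) :=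
  convex_weakStarCompact_iff_cobarCompact_general K hKcl
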